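/- One-step descent with a mixed gradient estimate (key inequality in the proof of Theorem 1). Let G > 0, let η > 0 satisfy η·L ≤ 1, let b ∈ [0, 1], and let w, gₐ, g_b ∈ E with ‖∇F(w)‖ ≤ G and ‖g_b‖ ≤ G. Then for g = (1 − b)·gₐ + b·g_b, F(w − η·g) ≤ (1 − η·μ)·F(w) + (η/2)·((1 − b)·‖∇F(w) − gₐ‖² + 4·b·G²). -/

import Mathlib

/-!
The `L`-Lipschitz gradient gives the descent inequality
`F (w + v) ≤ F w + ⟪∇F w, v⟫ + L/2 ‖v‖²`. For `v = -η g` with `η L ≤ 1`, completing the square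
turns this into `F (w - η g) ≤ F w - η/2 ‖∇F w‖² + η/2 ‖∇F w - g‖²`. The Polyak–Łojasiewicz
inequality bounds the middle term by `-η μ F w`, and convexity of `‖·‖²` splits the error of the
mixture `g` into `(1 - b) ‖∇F w - gₐ‖² + b ‖∇F w - g_b‖²`, where `‖∇F w - g_b‖ ≤ 2 G`.
-/

open InnerProductSpace

section

variable {E : Type*} [NormedAddCommGroup E] [InnerProductSpace ℝ E] [CompleteSpace E]

theorem HasGradientAt.hasDerivAt_comp_add_smul {F : E → ℝ} {w v g : E} {t : ℝ}
    (hF : HasGradientAt F g (w + t • v)) :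
    HasDerivAt (fun s : ℝ => F (w + s • v)) ⟪g, v⟫_ℝ t := by
  have hline : HasDerivAt (fun s : ℝ => w + s • v) v t := by
    simpa using ((hasDerivAt_id t).smul_const v).const_add w
  simpa [Function.comp_def, hF.fderiv_apply] using hF.hasFDerivAt.comp_hasDerivAt t hline

theorem apply_add_le_of_lipschitz_gradient {F : E → ℝ} {L : ℝ} (hdiff : Differentiable ℝ F)
    (hlip : ∀ w u : E, ‖gradient F w - gradient F u‖ ≤ L * ‖w - u‖) (w v : E) :
    F (w + v) ≤ F w + ⟪gradient F w, v⟫_ℝ + L / 2 * ‖v‖ ^ 2 := by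
  set φ : ℝ → ℝ := fun t => F (w + t • v) - t * ⟪gradient F w, v⟫_ℝ - L / 2 * ‖v‖ ^ 2 * t ^ 2
  have hφ : ∀ t : ℝ, HasDerivAt φ
      (⟪gradient F (w + t • v), v⟫_ℝ - ⟪gradient F w, v⟫_ℝ - L * ‖v‖ ^ 2 * t) t := by
    intro t
    have hquad : HasDerivAt (fun s : ℝ => L / 2 * ‖v‖ ^ 2 * s ^ 2) (L * ‖v‖ ^ 2 * t) t :=
      ((hasDerivAt_pow 2 t).const_mul _).congr_deriv (by push_cast; ring)
    exact (((hdiff _).hasGradientAt.hasDerivAt_comp_add_smul).sub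
      (hasDerivAt_mul_const _)).sub hquad
  have hanti : AntitoneOn φ (Set.Icc 0 1) := by
    refine antitoneOn_of_hasDerivWithinAt_nonpos (convex_Icc 0 1)
      (fun t _ => (hφ t).continuousAt.continuousWithinAt)
      (fun t _ => (hφ t).hasDerivWithinAt) fun t ht => ?_
    rw [interior_Icc] at ht
    have hinc : ⟪gradient F (w + t • v) - gradient F w, v⟫_ℝ ≤ L * ‖v‖ ^ 2 * t :=
      calc ⟪gradient F (w + t • v) - gradient F w, v⟫_ℝ
          ≤ ‖gradient F (w + t • v) - gradient F w‖ * ‖v‖ := real_inner_le_norm _ _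
        _ ≤ L * ‖w + t • v - w‖ * ‖v‖ := by gcongr; exact hlip _ _
        _ = L * ‖v‖ ^ 2 * t := by
          rw [add_sub_cancel_left, norm_smul, Real.norm_of_nonneg ht.1.le]
          ring
    rw [inner_sub_left] at hinc
    linarith
  have h01 : φ 1 ≤ φ 0 := hanti (by simp) (by simp) zero_le_one
  simp only [φ, one_smul, zero_smul, add_zero] at h01
  linarith

theorem apply_sub_smul_le_of_lipschitz_gradient {F : E → ℝ} {L η : ℝ}
    (hdiff : Differentiable ℝ F)
    (hlip : ∀ w u : E, ‖gradient F w - gradient F u‖ ≤ L * ‖w - u‖)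
    (hη : 0 ≤ η) (hηL : η * L ≤ 1) (w g : E) :
    F (w - η • g) ≤ F w - η / 2 * ‖gradient F w‖ ^ 2 + η / 2 * ‖gradient F w - g‖ ^ 2 := by
  have hdesc := apply_add_le_of_lipschitz_gradient hdiff hlip w (-(η • g))
  rw [← sub_eq_add_neg, inner_neg_right, real_inner_smul_right, norm_neg, norm_smul,
    Real.norm_of_nonneg hη] at hdesc
  have hstep : L * η * (η * ‖g‖ ^ 2) ≤ η * ‖g‖ ^ 2 := by
    rw [mul_comm L]
    exact mul_le_of_le_one_left (by positivity) hηL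
  rw [norm_sub_sq_real]
  linarith

end

theorem sq_norm_sub_convex_combination_le {V : Type*} [SeminormedAddCommGroup V]
    [NormedSpace ℝ V] (x a c : V) {b : ℝ} (hb₀ : 0 ≤ b) (hb₁ : b ≤ 1) :
    ‖x - ((1 - b) • a + b • c)‖ ^ 2 ≤ (1 - b) * ‖x - a‖ ^ 2 + b * ‖x - c‖ ^ 2 := by
  have hconv := (convexOn_univ_norm.pow (fun v _ => norm_nonneg v) 2).2 (Set.mem_univ (x - a))
    (Set.mem_univ (x - c)) (sub_nonneg.2 hb₁) hb₀ (sub_add_cancel 1 b)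
  have hx : (1 - b) • (x - a) + b • (x - c) = x - ((1 - b) • a + b • c) := by module
  simpa only [hx, smul_eq_mul, Pi.pow_apply] using hconv

theorem one_step_mixed_gradient_general
    {E : Type*} [NormedAddCommGroup E] [InnerProductSpace ℝ E] [CompleteSpace E]
    (F : E → ℝ) (L μ : ℝ)
    (hdiff : Differentiable ℝ F)
    (hlip : ∀ w u : E, ‖gradient F w - gradient F u‖ ≤ L * ‖w - u‖)
    (hPL : ∀ w : E, 2 * μ * F w ≤ ‖gradient F w‖ ^ 2)
    (G η : ℝ) (hη : 0 < η) (hηL : η * L ≤ 1)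
    (b : ℝ) (hb : b ∈ Set.Icc (0 : ℝ) 1)
    (w ga gb : E) (hgrad : ‖gradient F w‖ ≤ G) (hgb : ‖gb‖ ≤ G) :
    F (w - η • ((1 - b) • ga + b • gb)) ≤
      (1 - η * μ) * F w + η / 2 * ((1 - b) * ‖gradient F w - ga‖ ^ 2 + 4 * b * G ^ 2) := by
  obtain ⟨hb₀, hb₁⟩ := hb
  have hfar : ‖gradient F w - gb‖ ^ 2 ≤ 4 * G ^ 2 := by
    have : ‖gradient F w - gb‖ ≤ 2 * G := (norm_sub_le _ _).trans (by linarith)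
    nlinarith [norm_nonneg (gradient F w - gb)]
  have herr : ‖gradient F w - ((1 - b) • ga + b • gb)‖ ^ 2
      ≤ (1 - b) * ‖gradient F w - ga‖ ^ 2 + 4 * b * G ^ 2 := by
    linarith [sq_norm_sub_convex_combination_le (gradient F w) ga gb hb₀ hb₁,
      mul_le_mul_of_nonneg_left hfar hb₀]
  have hη₂ : 0 ≤ η / 2 := (half_pos hη).le
  calc F (w - η • ((1 - b) • ga + b • gb))
      ≤ F w - η / 2 * ‖gradient F w‖ ^ 2
          + η / 2 * ‖gradient F w - ((1 - b) • ga + b • gb)‖ ^ 2 :=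
        apply_sub_smul_le_of_lipschitz_gradient hdiff hlip hη.le hηL w _
    _ ≤ (1 - η * μ) * F w + η / 2 * ((1 - b) * ‖gradient F w - ga‖ ^ 2 + 4 * b * G ^ 2) := by
        linarith [mul_le_mul_of_nonneg_left (hPL w) hη₂, mul_le_mul_of_nonneg_left herr hη₂]

/-- One-step descent with a mixed gradient estimate
(key inequality in the proof of Theorem 1). -/
theorem one_step_mixed_gradient
    {E : Type*} [NormedAddCommGroup E] [InnerProductSpace ℝ E] [CompleteSpace E]
    (F : E → ℝ) (L μ : ℝ) (hL : 0 < L) (hμ : 0 < μ)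
    (hdiff : Differentiable ℝ F)
    (hlip : ∀ w u : E, ‖gradient F w - gradient F u‖ ≤ L * ‖w - u‖)
    (hFnonneg : ∀ w : E, 0 ≤ F w)
    (hPL : ∀ w : E, 2 * μ * F w ≤ ‖gradient F w‖ ^ 2)
    (G η : ℝ) (hG : 0 < G) (hη : 0 < η) (hηL : η * L ≤ 1)
    (b : ℝ) (hb : b ∈ Set.Icc (0 : ℝ) 1)
    (w ga gb : E) (hgrad : ‖gradient F w‖ ≤ G) (hgb : ‖gb‖ ≤ G) :
    F (w - η • ((1 - b) • ga + b • gb)) ≤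
      (1 - η * μ) * F w + η / 2 * ((1 - b) * ‖gradient F w - ga‖ ^ 2 + 4 * b * G ^ 2) :=
  one_step_mixed_gradient_general F L μ hdiff hlip hPL G η hη hηL b hb w ga gb hgrad hgb
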